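/- arXiv:1509.07560 — 3 statements merged into one kernel-verified Lean document; each statement's English description precedes it below -/
import Mathlib

section
/- Let U be a Banach space, V a Hilbert space, and b : U × V → ℝ a bilinear form satisfying: (i) for all u ∈ U, if b(u,v) = 0 for all v ∈ V then u = 0; (ii) there is C_infsup > 0 with C_infsup‖v‖_V ≤ sup_{u ∈ U, u ≠ 0} b(u,v)/‖u‖_U for all v ∈ V; (iii) there is C_b > 0 with b(u,v) ≤ C_b‖u‖_U‖v‖_V for all u, v. Then the map u ↦ ‖u‖_E := sup_{v ∈ V, v ≠ 0} b(u,v)/‖v‖_V defines a norm on U satisfying C_infsup‖u‖_U ≤ ‖u‖_E ≤ C_b‖u‖_U for all u ∈ U. -/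
/-!
By the Riesz representation theorem, `b u v = ⟪T u, v⟫` for a bounded operator `T : U → V`
(the trial-to-test operator), and the energy norm of `u` is `‖T u‖`; the upper bound and the norm
axioms follow at once. The inf-sup condition says that the adjoint `φ ↦ φ ∘ T` is bounded below by
`C_infsup`, so by Hahn–Banach separation the closure of `T '' closedBall 0 ρ` contains
`closedBall 0 (C_infsup * ρ)`. Correcting approximate preimages by a geometric series, as in the
proof of the open mapping theorem, gives exact preimages of norm at most `ε * ‖y‖ / C_infsup` for
every `ε > 1`, and injectivity of `T` turns this into `C_infsup * ‖u‖ ≤ ‖T u‖`.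
-/
open scoped RealInnerProductSpace
open Metric Filter Topology

namespace ContinuousLinearMap

section Iteration

variable {𝕜 E F : Type*} [NontriviallyNormedField 𝕜] [NormedAddCommGroup E] [NormedSpace 𝕜 E]
  [CompleteSpace E] [NormedAddCommGroup F] [NormedSpace 𝕜 F]

theorem exists_preimage_norm_le_of_approx (f : E →L[𝕜] F) {C q : ℝ} (hC : 0 ≤ C) (hq₀ : 0 ≤ q)
    (hq₁ : q < 1)
    (happrox : ∀ y, ∃ x, ‖x‖ ≤ C * ‖y‖ ∧ ‖y - f x‖ ≤ q * ‖y‖) (y : F) :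
    ∃ x, f x = y ∧ ‖x‖ ≤ C / (1 - q) * ‖y‖ := by
  choose g hg_norm hg_approx using happrox
  set residual : F → F := fun y => y - f (g y)
  have residual_iterate_le (n : ℕ) : ‖residual^[n] y‖ ≤ q ^ n * ‖y‖ := by
    induction n with
    | zero => simp
    | succ n ih =>
      rw [Function.iterate_succ_apply', pow_succ', mul_assoc]
      exact (hg_approx _).trans (by gcongr)
  set u : ℕ → E := fun n => g (residual^[n] y)
  have u_le (n : ℕ) : ‖u n‖ ≤ C * ‖y‖ * q ^ n :=
    calc ‖u n‖ ≤ C * ‖residual^[n] y‖ := hg_norm _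
      _ ≤ C * (q ^ n * ‖y‖) := by gcongr; exact residual_iterate_le n
      _ = C * ‖y‖ * q ^ n := by ring
  have summable_geom : Summable fun n => C * ‖y‖ * q ^ n :=
    (summable_geometric_of_lt_one hq₀ hq₁).mul_left _
  have summable_norm_u : Summable fun n => ‖u n‖ :=
    .of_nonneg_of_le (fun n => norm_nonneg _) u_le summable_geom
  have partial_sum (n : ℕ) : f (∑ i ∈ Finset.range n, u i) = y - residual^[n] y := by
    induction n with
    | zero => simp
    | succ n ih => rw [Finset.sum_range_succ, map_add, ih, Function.iterate_succ_apply', sub_add]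
  refine ⟨∑' n, u n, ?_, ?_⟩
  · have lim₁ := (f.continuous.tendsto _).comp summable_norm_u.of_norm.hasSum.tendsto_sum_nat
    have lim₂ : Tendsto (fun n => y - residual^[n] y) atTop (𝓝 (y - 0)) := by
      refine tendsto_const_nhds.sub (squeeze_zero_norm residual_iterate_le ?_)
      simpa using (tendsto_pow_atTop_nhds_zero_of_lt_one hq₀ hq₁).mul_const ‖y‖
    rw [sub_zero] at lim₂
    exact tendsto_nhds_unique (by simpa only [Function.comp_def, partial_sum] using lim₁) lim₂
  · calc ‖∑' n, u n‖ ≤ ∑' n, ‖u n‖ := norm_tsum_le_tsum_norm summable_norm_u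
      _ ≤ ∑' n, C * ‖y‖ * q ^ n := summable_norm_u.tsum_le_tsum u_le summable_geom
      _ = C / (1 - q) * ‖y‖ := by
        rw [tsum_mul_left, tsum_geometric_of_lt_one hq₀ hq₁, div_eq_mul_inv]; ring

end Iteration

section Dual

variable {E F : Type*} [NormedAddCommGroup E] [NormedSpace ℝ E] [NormedAddCommGroup F]
  [NormedSpace ℝ F]

theorem iSup_div_norm_le_opNorm (g : StrongDual ℝ E) :
    ⨆ x : {x : E // x ≠ 0}, g x / ‖x.1‖ ≤ ‖g‖ :=
  Real.iSup_le (fun x => div_le_of_le_mul₀ (norm_nonneg _) (norm_nonneg _)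
    ((le_abs_self _).trans (g.le_opNorm x))) (norm_nonneg g)

theorem mem_closure_image_closedBall_of_mul_norm_le_opNorm_comp (f : E →L[ℝ] F) {c ρ : ℝ}
    (hρ : 0 < ρ) (hf : ∀ φ : StrongDual ℝ F, c * ‖φ‖ ≤ ‖φ.comp f‖) {y : F} (hy : ‖y‖ ≤ c * ρ) :
    y ∈ closure (f '' closedBall 0 ρ) := by
  by_contra hy_notMem
  have hconvex : Convex ℝ (closure (f '' closedBall 0 ρ)) :=
    ((convex_closedBall 0 ρ).linear_image f.toLinearMap).closure
  obtain ⟨φ, s, hφS, hφy⟩ := geometric_hahn_banach_closed_point hconvex isClosed_closure hy_notMem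
  have hφf_lt (x : E) (hx : ‖x‖ ≤ ρ) : φ (f x) < s :=
    hφS _ (subset_closure ⟨x, mem_closedBall_zero_iff.2 hx, rfl⟩)
  have hs : 0 < s := by simpa using hφf_lt 0 (by simpa using hρ.le)
  have hφf : ‖φ.comp f‖ ≤ s / ρ := by
    refine opNorm_bound_of_ball_bound hρ s _ fun x hx => ?_
    rw [mem_closedBall_zero_iff] at hx
    have := hφf_lt (-x) (by rwa [norm_neg])
    simp only [map_neg] at this
    exact (abs_lt.2 ⟨by linarith, hφf_lt x hx⟩).le
  have : φ y ≤ s :=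
    calc φ y ≤ ‖φ‖ * ‖y‖ := (le_abs_self _).trans (φ.le_opNorm y)
      _ ≤ ‖φ‖ * (c * ρ) := by gcongr
      _ = c * ‖φ‖ * ρ := by ring
      _ ≤ ‖φ.comp f‖ * ρ := by gcongr; exact hf φ
      _ ≤ s := (le_div_iff₀ hρ).1 hφf
  exact hφy.not_ge this

variable [CompleteSpace E]

theorem mul_norm_le_norm_apply_of_mul_norm_le_opNorm_comp (f : E →L[ℝ] F)
    (hinj : Function.Injective f) {c : ℝ} (hc : 0 < c)
    (hf : ∀ φ : StrongDual ℝ F, c * ‖φ‖ ≤ ‖φ.comp f‖) (x : E) : c * ‖x‖ ≤ ‖f x‖ := by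
  have happrox {q : ℝ} (hq : 0 < q) (y : F) :
      ∃ x, ‖x‖ ≤ c⁻¹ * ‖y‖ ∧ ‖y - f x‖ ≤ q * ‖y‖ := by
    rcases eq_or_ne y 0 with rfl | hy
    · exact ⟨0, by simp⟩
    have hy' : 0 < ‖y‖ := norm_pos_iff.2 hy
    have hmem := mem_closure_image_closedBall_of_mul_norm_le_opNorm_comp f
      (by positivity : 0 < c⁻¹ * ‖y‖) hf (mul_inv_cancel_left₀ hc.ne' _).ge
    obtain ⟨_, ⟨x, hx, rfl⟩, hdist⟩ := Metric.mem_closure_iff.1 hmem (q * ‖y‖) (by positivity)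
    exact ⟨x, mem_closedBall_zero_iff.1 hx, (dist_eq_norm y (f x) ▸ hdist).le⟩
  suffices ‖x‖ ≤ c⁻¹ * ‖f x‖ by rwa [← le_inv_mul_iff₀ hc]
  refine (le_iff_forall_one_lt_le_mul₀ (by positivity)).2 fun ε hε => ?_
  obtain ⟨x', hx'x, hx'⟩ := f.exists_preimage_norm_le_of_approx (inv_nonneg.2 hc.le)
    (sub_nonneg.2 (inv_le_one_of_one_le₀ hε.le)) (sub_lt_self _ (by positivity))
    (happrox (sub_pos.2 (inv_lt_one_of_one_lt₀ hε))) (f x)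
  rw [hinj hx'x, sub_sub_cancel, div_inv_eq_mul] at hx'
  linarith

end Dual

end ContinuousLinearMap

theorem LinearMap.norm_apply_apply_le_of_apply_apply_le {U V : Type*} [NormedAddCommGroup U]
    [NormedSpace ℝ U] [NormedAddCommGroup V] [NormedSpace ℝ V] (b : U →ₗ[ℝ] V →ₗ[ℝ] ℝ) {C : ℝ}
    (h : ∀ u v, b u v ≤ C * ‖u‖ * ‖v‖) (u : U) (v : V) : ‖b u v‖ ≤ C * ‖u‖ * ‖v‖ := by
  have := h (-u) v
  simp only [map_neg, LinearMap.neg_apply, norm_neg] at this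
  exact abs_le.2 ⟨by linarith, h u v⟩

section InnerProductSpace

variable {U V : Type*} [NormedAddCommGroup V] [InnerProductSpace ℝ V]

theorem iSup_inner_div_norm_eq_norm (w : V) : ⨆ v : {v : V // v ≠ 0}, ⟪w, v.1⟫ / ‖v.1‖ = ‖w‖ := by
  have hle (v : {v : V // v ≠ 0}) : ⟪w, v.1⟫ / ‖v.1‖ ≤ ‖w‖ :=
    div_le_of_le_mul₀ (norm_nonneg _) (norm_nonneg _) (real_inner_le_norm w v)
  refine le_antisymm (Real.iSup_le hle (norm_nonneg w)) ?_
  rcases eq_or_ne w 0 with rfl | hw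
  · simp
  · calc ‖w‖ = ⟪w, w⟫ / ‖w‖ := by
          rw [real_inner_self_eq_norm_mul_norm, mul_div_cancel_right₀ _ (norm_ne_zero_iff.2 hw)]
      _ ≤ _ := le_ciSup ⟨‖w‖, Set.forall_mem_range.2 hle⟩ (⟨w, hw⟩ : {v : V // v ≠ 0})

variable [NormedAddCommGroup U] [NormedSpace ℝ U] [CompleteSpace V]

noncomputable def trialToTest (B : U →L[ℝ] V →L[ℝ] ℝ) : U →L[ℝ] V :=
  ((InnerProductSpace.toDual ℝ V).symm.toContinuousLinearEquiv :
    StrongDual ℝ V →SL[starRingEnd ℝ] V).comp B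

theorem inner_trialToTest (B : U →L[ℝ] V →L[ℝ] ℝ) (u : U) (v : V) :
    ⟪trialToTest B u, v⟫ = B u v := by
  simp [trialToTest]

theorem iSup_div_norm_eq_norm_trialToTest (B : U →L[ℝ] V →L[ℝ] ℝ) (u : U) :
    ⨆ v : {v : V // v ≠ 0}, B u v.1 / ‖v.1‖ = ‖trialToTest B u‖ := by
  simp only [← inner_trialToTest, iSup_inner_div_norm_eq_norm]

theorem trialToTest_injective (B : U →L[ℝ] V →L[ℝ] ℝ) (hB : ∀ u, (∀ v, B u v = 0) → u = 0) :
    Function.Injective (trialToTest B) :=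
  injective_iff_map_eq_zero _ |>.2 fun u hu =>
    hB u fun v => by rw [← inner_trialToTest, hu, inner_zero_left]

theorem mul_norm_le_opNorm_comp_trialToTest (B : U →L[ℝ] V →L[ℝ] ℝ) {c : ℝ}
    (hB : ∀ v, c * ‖v‖ ≤ ⨆ u : {u : U // u ≠ 0}, B u.1 v / ‖u.1‖) (φ : StrongDual ℝ V) :
    c * ‖φ‖ ≤ ‖φ.comp (trialToTest B)‖ := by
  set z := (InnerProductSpace.toDual ℝ V).symm φ
  have hφ (u : U) : φ.comp (trialToTest B) u = B u z := by
    rw [ContinuousLinearMap.comp_apply, ← InnerProductSpace.toDual_symm_apply, real_inner_comm,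
      inner_trialToTest]
  calc c * ‖φ‖ = c * ‖z‖ := by simp [z]
    _ ≤ ⨆ u : {u : U // u ≠ 0}, B u.1 z / ‖u.1‖ := hB z
    _ ≤ ‖φ.comp (trialToTest B)‖ := by
      simpa only [hφ] using (φ.comp (trialToTest B)).iSup_div_norm_le_opNorm

end InnerProductSpace

/-- The energy norm `u ↦ sup_{v ≠ 0} b(u,v)/‖v‖_V` is a norm on `U`
equivalent to `‖·‖_U`, with constants `C_infsup` and `C_b`. -/
theorem dpg_energy_norm_equivalence
    {U V : Type*} [NormedAddCommGroup U] [NormedSpace ℝ U] [CompleteSpace U]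
    [NormedAddCommGroup V] [InnerProductSpace ℝ V] [CompleteSpace V]
    (b : U →ₗ[ℝ] V →ₗ[ℝ] ℝ) (Cinf Cb : ℝ) (hCinf : 0 < Cinf) (hCb : 0 < Cb)
    (hinj : ∀ u : U, (∀ v : V, b u v = 0) → u = 0)
    (hinfsup : ∀ v : V, Cinf * ‖v‖ ≤ ⨆ u : {u : U // u ≠ 0}, b u.1 v / ‖u.1‖)
    (hbdd : ∀ (u : U) (v : V), b u v ≤ Cb * ‖u‖ * ‖v‖) :
    ∀ u : U,
      Cinf * ‖u‖ ≤ (⨆ v : {v : V // v ≠ 0}, b u v.1 / ‖v.1‖) ∧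
      (⨆ v : {v : V // v ≠ 0}, b u v.1 / ‖v.1‖) ≤ Cb * ‖u‖ ∧
      ((⨆ v : {v : V // v ≠ 0}, b u v.1 / ‖v.1‖) = 0 ↔ u = 0) ∧
      (∀ u' : U,
        (⨆ v : {v : V // v ≠ 0}, b (u + u') v.1 / ‖v.1‖) ≤
          (⨆ v : {v : V // v ≠ 0}, b u v.1 / ‖v.1‖) +
            (⨆ v : {v : V // v ≠ 0}, b u' v.1 / ‖v.1‖)) ∧
      (∀ c : ℝ,
        (⨆ v : {v : V // v ≠ 0}, b (c • u) v.1 / ‖v.1‖) =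
          |c| * (⨆ v : {v : V // v ≠ 0}, b u v.1 / ‖v.1‖)) := by
  set B := b.mkContinuous₂ Cb (b.norm_apply_apply_le_of_apply_apply_le hbdd)
  set T := trialToTest B
  have energy_eq (u : U) : ⨆ v : {v : V // v ≠ 0}, b u v.1 / ‖v.1‖ = ‖T u‖ :=
    iSup_div_norm_eq_norm_trialToTest B u
  have hT_inj : Function.Injective T := trialToTest_injective B hinj
  have lower (u : U) : Cinf * ‖u‖ ≤ ‖T u‖ := T.mul_norm_le_norm_apply_of_mul_norm_le_opNorm_comp
    hT_inj hCinf (mul_norm_le_opNorm_comp_trialToTest B hinfsup) u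
  have upper (u : U) : ‖T u‖ ≤ Cb * ‖u‖ := energy_eq u ▸ Real.iSup_le (fun v =>
    div_le_of_le_mul₀ (norm_nonneg _) (by positivity) (hbdd u v)) (by positivity)
  intro u
  simp only [energy_eq]
  refine ⟨lower u, upper u, norm_eq_zero.trans (map_eq_zero_iff T hT_inj), fun u' => ?_,
    fun c => ?_⟩
  · exact (map_add T u u').symm ▸ norm_add_le _ _
  · rw [map_smul, norm_smul, Real.norm_eq_abs]
end

section
/- Let U and V be real Hilbert spaces, and b : U × V → ℝ a bounded bilinear form satisfying the injectivity condition (b(u,v)=0 for all v implies u=0) and the inf-sup condition C_infsup‖v‖_V ≤ sup_{u≠0} b(u,v)/‖u‖_U for all v ∈ V with C_infsup > 0. Then for every bounded linear functional L : V → ℝ there exists a unique u ∈ U with b(u,v) = L(v) for all v ∈ V, and moreover sup_{v≠0} b(u,v)/‖v‖_V = ‖L‖_{V'}. -/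
open scoped RealInnerProductSpace

open InnerProductSpace ContinuousLinearMap

set_option linter.unusedSectionVars false

noncomputable def dpgAop {U V : Type*} [NormedAddCommGroup U] [InnerProductSpace ℝ U]
    [NormedAddCommGroup V] [InnerProductSpace ℝ V] [CompleteSpace V]
    (b : U →L[ℝ] V →L[ℝ] ℝ) : U →L[ℝ] V :=
  LinearMap.mkContinuous
    { toFun := fun u => (InnerProductSpace.toDual ℝ V).symm (b u)
      map_add' := by intro x y; simp
      map_smul' := by intro c x; simp }
    ‖b‖ (fun u => by
      simp only [LinearMap.coe_mk, AddHom.coe_mk, LinearIsometryEquiv.norm_map]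
      exact b.le_opNorm u)

lemma dpgAop_inner {U V : Type*} [NormedAddCommGroup U] [InnerProductSpace ℝ U]
    [NormedAddCommGroup V] [InnerProductSpace ℝ V] [CompleteSpace V]
    (b : U →L[ℝ] V →L[ℝ] ℝ) (u : U) (v : V) :
    ⟪dpgAop b u, v⟫ = b u v := by
  simp [dpgAop, LinearMap.mkContinuous_apply, InnerProductSpace.toDual_symm_apply]

lemma sup_ratio_eq_norm {V : Type*} [NormedAddCommGroup V] [InnerProductSpace ℝ V]
    (f : V →L[ℝ] ℝ) : (⨆ v : {v : V // v ≠ 0}, f v.1 / ‖v.1‖) = ‖f‖ := by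
  have hbdd : BddAbove (Set.range fun v : {v : V // v ≠ 0} => f v.1 / ‖v.1‖) := by
    refine ⟨‖f‖, ?_⟩
    rintro x ⟨v, rfl⟩
    have hv : 0 < ‖v.1‖ := norm_pos_iff.mpr v.2
    rw [div_le_iff₀ hv]
    exact (le_abs_self _).trans (f.le_opNorm v.1)
  refine le_antisymm ?_ ?_
  · refine Real.iSup_le (fun v => ?_) (norm_nonneg f)
    have hv : 0 < ‖v.1‖ := norm_pos_iff.mpr v.2
    rw [div_le_iff₀ hv]
    exact (le_abs_self _).trans (f.le_opNorm v.1)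
  · have hS : 0 ≤ ⨆ v : {v : V // v ≠ 0}, f v.1 / ‖v.1‖ := by
      by_cases h : Nonempty {v : V // v ≠ 0}
      · obtain ⟨v⟩ := h
        have h1 := le_ciSup hbdd v
        have h2 := le_ciSup hbdd ⟨-v.1, neg_ne_zero.mpr v.2⟩
        simp only [map_neg, norm_neg, neg_div] at h2
        linarith
      · rw [not_nonempty_iff] at h
        rw [iSup, Set.range_eq_empty, Real.sSup_empty]
    refine f.opNorm_le_bound hS (fun v => ?_)
    by_cases hv : v = 0
    · simp [hv]
    · have hvn : 0 < ‖v‖ := norm_pos_iff.mpr hv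
      rw [Real.norm_eq_abs, abs_le]
      constructor
      · have h2 := le_ciSup hbdd ⟨-v, neg_ne_zero.mpr hv⟩
        simp only [map_neg, norm_neg] at h2
        rw [div_le_iff₀ hvn] at h2
        linarith
      · have h1 := le_ciSup hbdd ⟨v, hv⟩
        rw [div_le_iff₀ hvn] at h1
        exact h1

/-- well-posedness of the variational problem `b(u,v) = L(v)` under
injectivity and inf-sup conditions, with energy-norm identity `‖u‖_E = ‖L‖_{V'}`. -/
theorem dpg_well_posedness
    {U V : Type*} [NormedAddCommGroup U] [InnerProductSpace ℝ U] [CompleteSpace U]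
    [NormedAddCommGroup V] [InnerProductSpace ℝ V] [CompleteSpace V]
    (b : U →L[ℝ] V →L[ℝ] ℝ) (Cinf : ℝ) (hCinf : 0 < Cinf)
    (hinj : ∀ u : U, (∀ v : V, b u v = 0) → u = 0)
    (hinfsup : ∀ v : V, Cinf * ‖v‖ ≤ ⨆ u : {u : U // u ≠ 0}, b u.1 v / ‖u.1‖) :
    ∀ L : V →L[ℝ] ℝ,
      (∃! u : U, ∀ v : V, b u v = L v) ∧
      (∀ u : U, (∀ v : V, b u v = L v) →
        (⨆ v : {v : V // v ≠ 0}, b u v.1 / ‖v.1‖) = ‖L‖) := by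
  intro L
  set A := dpgAop b with hA
  set T := ContinuousLinearMap.adjoint A with hT
  -- the adjoint is bounded below
  have hTlow : ∀ v : V, Cinf * ‖v‖ ≤ ‖T v‖ := by
    intro v
    refine (hinfsup v).trans (Real.iSup_le (fun u => ?_) (norm_nonneg _))
    have hu : 0 < ‖u.1‖ := norm_pos_iff.mpr u.2
    rw [div_le_iff₀ hu]
    have : b u.1 v = ⟪u.1, T v⟫ := by
      rw [hT, ContinuousLinearMap.adjoint_inner_right]
      exact (dpgAop_inner b u.1 v).symm
    rw [this]
    exact (real_inner_le_norm u.1 (T v)).trans (by rw [mul_comm])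
  -- the bilinear form B2 v w = b (T v) w is coercive
  set B2 : V →L[ℝ] V →L[ℝ] ℝ := b.comp T with hB2
  have hB2app : ∀ v w : V, B2 v w = ⟪T v, T w⟫ := by
    intro v w
    rw [hB2, ContinuousLinearMap.comp_apply, ← dpgAop_inner b (T v) w, hT,
      ContinuousLinearMap.adjoint_inner_right]
  have hcoer : IsCoercive B2 := by
    refine ⟨Cinf * Cinf, mul_pos hCinf hCinf, fun v => ?_⟩
    have h1 := hTlow v
    have : (Cinf * ‖v‖) * (Cinf * ‖v‖) ≤ ‖T v‖ * ‖T v‖ :=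
      mul_le_mul h1 h1 (by positivity) (norm_nonneg _)
    rw [hB2app v v, real_inner_self_eq_norm_mul_norm]
    nlinarith [this]
  -- existence
  set e := hcoer.continuousLinearEquivOfBilin with he
  set ℓ := (InnerProductSpace.toDual ℝ V).symm L with hℓ
  set u₀ := T (e.symm ℓ) with hu₀
  have hu₀sol : ∀ v : V, b u₀ v = L v := by
    intro v
    have h1 : B2 (e.symm ℓ) v = ⟪e (e.symm ℓ), v⟫ :=
      (hcoer.continuousLinearEquivOfBilin_apply (e.symm ℓ) v).symm
    have h2 : b u₀ v = B2 (e.symm ℓ) v := rfl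
    rw [h2, h1, e.apply_symm_apply, hℓ, InnerProductSpace.toDual_symm_apply]
  refine ⟨⟨u₀, hu₀sol, fun y hy => ?_⟩, fun u hu => ?_⟩
  · have : y - u₀ = 0 := hinj (y - u₀) (fun v => by
      simp [map_sub, hy v, hu₀sol v])
    exact sub_eq_zero.mp this
  · have hbu : b u = L := ContinuousLinearMap.ext hu
    rw [show (fun v : {v : V // v ≠ 0} => b u v.1 / ‖v.1‖) = fun v => L v.1 / ‖v.1‖ from
      funext fun v => by rw [hu v.1]]
    exact sup_ratio_eq_norm L
end

section
/- Let U, V be real Hilbert spaces, b : U × V → ℝ a bounded bilinear form satisfying injectivity and the inf-sup condition, L ∈ V', and let u ∈ U solve b(u,v) = L(v) for all v ∈ V. Let U_h ⊆ U be a finite-dimensional subspace and Θ : U → V the trial-to-test operator defined by ⟨Θw, v⟩_V = b(w,v) for all v. Then there exists a unique u_h ∈ U_h with b(u_h, Θw) = L(Θw) for all w ∈ U_h, and the error is the best approximation in the energy norm: ‖u − u_h‖_E = inf_{w ∈ U_h} ‖u − w‖_E, where ‖z‖_E := sup_{v≠0} b(z,v)/‖v‖_V. -/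
/-!
Writing `Θ` for the trial-to-test operator, `b z v = ⟪Θ z, v⟫`, so the energy norm of `z` is
`‖Θ z‖`, and the discrete equations `b uₕ (Θ w) = L (Θ w) = b u (Θ w)` say that `Θ u - Θ uₕ` is
orthogonal to the finite-dimensional space `Θ Uₕ`. Hence `Θ uₕ` is the orthogonal projection of
`Θ u` onto `Θ Uₕ`: it exists, it is unique because `Θ` is injective, and it is the point of `Θ Uₕ`
nearest to `Θ u`, which is the best-approximation property in the energy norm.
-/

open scoped RealInnerProductSpace

theorem iSup_inner_div_norm {V : Type*} [NormedAddCommGroup V] [InnerProductSpace ℝ V] (x : V) :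
    ⨆ v : {v : V // v ≠ 0}, ⟪x, v.1⟫ / ‖v.1‖ = ‖x‖ := by
  rcases eq_or_ne x 0 with rfl | hx
  · simp only [inner_zero_left, zero_div, norm_zero, Real.iSup_const_zero]
  have : Nonempty {v : V // v ≠ 0} := ⟨⟨x, hx⟩⟩
  have hle : ∀ v : {v : V // v ≠ 0}, ⟪x, v.1⟫ / ‖v.1‖ ≤ ‖x‖ := fun v =>
    (div_le_iff₀ (norm_pos_iff.2 v.2)).2 (real_inner_le_norm x v.1)
  refine le_antisymm (ciSup_le hle) (le_ciSup_of_le ⟨‖x‖, Set.forall_mem_range.2 hle⟩ ⟨x, hx⟩ ?_)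
  rw [real_inner_self_eq_norm_sq, sq, mul_div_cancel_right₀ _ (norm_ne_zero_iff.2 hx)]

section OrthogonalToMap

variable {U V : Type*} [AddCommGroup U] [Module ℝ U] [NormedAddCommGroup V] [InnerProductSpace ℝ V]
  (T : U →ₗ[ℝ] V) (Uh : Submodule ℝ U)

theorem exists_mem_sub_mem_orthogonal_map [FiniteDimensional ℝ Uh] (x : U) :
    ∃ w ∈ Uh, T x - T w ∈ (Uh.map T)ᗮ := by
  have : FiniteDimensional ℝ (Uh.map T) := Module.Finite.map Uh T
  obtain ⟨w, hw, hTw⟩ := ((Uh.map T).orthogonalProjectionOnto (T x)).2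
  exact ⟨w, hw, hTw ▸ (Uh.map T).sub_starProjection_mem_orthogonal (T x)⟩

variable {T Uh}

theorem eq_of_sub_mem_orthogonal_map (hT : Function.Injective T) {x w₁ w₂ : U}
    (hw₁ : w₁ ∈ Uh) (hw₂ : w₂ ∈ Uh)
    (h₁ : T x - T w₁ ∈ (Uh.map T)ᗮ) (h₂ : T x - T w₂ ∈ (Uh.map T)ᗮ) : w₁ = w₂ := by
  have hmem : T w₁ - T w₂ ∈ Uh.map T :=
    map_sub T w₁ w₂ ▸ Submodule.mem_map_of_mem (Uh.sub_mem hw₁ hw₂)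
  have hperp : T w₁ - T w₂ ∈ (Uh.map T)ᗮ := by
    simpa only [sub_sub_sub_cancel_left] using Submodule.sub_mem _ h₂ h₁
  exact hT (sub_eq_zero.1 (Submodule.disjoint_def.1 (Uh.map T).orthogonal_disjoint _ hmem hperp))

theorem norm_sub_eq_iInf_of_sub_mem_orthogonal_map {x w : U} (hw : w ∈ Uh)
    (h : T x - T w ∈ (Uh.map T)ᗮ) : ‖T x - T w‖ = ⨅ w' : Uh, ‖T x - T w'‖ := by
  refine ((Submodule.norm_eq_iInf_iff_real_inner_eq_zero _ (Submodule.mem_map_of_mem hw)).2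
    fun y hy => Submodule.inner_left_of_mem_orthogonal hy h).trans ?_
  exact ((T.submoduleMap_surjective Uh).iInf_comp fun y : Uh.map T => ‖T x - y‖).symm

end OrthogonalToMap

section TrialToTest

variable {U V : Type*} [NormedAddCommGroup U] [InnerProductSpace ℝ U]
  [NormedAddCommGroup V] [InnerProductSpace ℝ V]
  {b : U →L[ℝ] V →L[ℝ] ℝ} {Θ : U →L[ℝ] V}

theorem iSup_div_norm_eq_norm_of_inner_eq (hΘ : ∀ (w : U) (v : V), ⟪Θ w, v⟫ = b w v) (z : U) :
    ⨆ v : {v : V // v ≠ 0}, b z v.1 / ‖v.1‖ = ‖Θ z‖ := by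
  simp only [← hΘ, iSup_inner_div_norm]

theorem injective_of_inner_eq (hΘ : ∀ (w : U) (v : V), ⟪Θ w, v⟫ = b w v)
    (hinj : ∀ u : U, (∀ v : V, b u v = 0) → u = 0) : Function.Injective Θ :=
  (injective_iff_map_eq_zero Θ).2 fun z hz => hinj z fun v => by rw [← hΘ, hz, inner_zero_left]

theorem forall_eq_iff_sub_mem_orthogonal_map (hΘ : ∀ (w : U) (v : V), ⟪Θ w, v⟫ = b w v)
    {L : V →L[ℝ] ℝ} {u : U} (hu : ∀ v : V, b u v = L v) (Uh : Submodule ℝ U) (uh : U) :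
    (∀ w : Uh, b uh (Θ w) = L (Θ w)) ↔ Θ u - Θ uh ∈ (Uh.map (Θ : U →ₗ[ℝ] V))ᗮ := by
  simp only [Submodule.mem_orthogonal, Submodule.mem_map, forall_exists_index, and_imp,
    forall_apply_eq_imp_iff₂, Subtype.forall]
  refine forall₂_congr fun w _ => ?_
  rw [ContinuousLinearMap.coe_coe, inner_sub_right, real_inner_comm, hΘ, real_inner_comm, hΘ,
    hu, sub_eq_zero, eq_comm]

end TrialToTest

theorem dpg_best_approximation_general
    {U V : Type*} [NormedAddCommGroup U] [InnerProductSpace ℝ U]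
    [NormedAddCommGroup V] [InnerProductSpace ℝ V]
    (b : U →L[ℝ] V →L[ℝ] ℝ)
    (hinj : ∀ u : U, (∀ v : V, b u v = 0) → u = 0)
    (L : V →L[ℝ] ℝ) (u : U) (hu : ∀ v : V, b u v = L v)
    (Uh : Submodule ℝ U) [FiniteDimensional ℝ Uh]
    (Θ : U →L[ℝ] V) (hΘ : ∀ (w : U) (v : V), ⟪Θ w, v⟫ = b w v) :
    ∃ uh : Uh,
      (∀ w : Uh, b (uh : U) (Θ (w : U)) = L (Θ (w : U))) ∧
      (∀ uh' : Uh, (∀ w : Uh, b (uh' : U) (Θ (w : U)) = L (Θ (w : U))) → uh' = uh) ∧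
      (⨆ v : {v : V // v ≠ 0}, b (u - (uh : U)) v.1 / ‖v.1‖) =
        ⨅ w : Uh, ⨆ v : {v : V // v ≠ 0}, b (u - (w : U)) v.1 / ‖v.1‖ := by
  have hgal := forall_eq_iff_sub_mem_orthogonal_map hΘ hu Uh
  obtain ⟨w₀, hw₀, horth⟩ := exists_mem_sub_mem_orthogonal_map (Θ : U →ₗ[ℝ] V) Uh u
  refine ⟨⟨w₀, hw₀⟩, (hgal w₀).2 horth, fun uh' h' => ?_, ?_⟩
  · exact Subtype.ext (eq_of_sub_mem_orthogonal_map (injective_of_inner_eq hΘ hinj)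
      uh'.2 hw₀ ((hgal uh').1 h') horth)
  · simp_rw [iSup_div_norm_eq_norm_of_inner_eq hΘ, map_sub]
    exact norm_sub_eq_iInf_of_sub_mem_orthogonal_map hw₀ horth

/-- the ideal DPG method delivers the unique discrete solution and the
best approximation in the energy norm `‖z‖_E = sup_{v≠0} b(z,v)/‖v‖_V`. -/
theorem dpg_best_approximation
    {U V : Type*} [NormedAddCommGroup U] [InnerProductSpace ℝ U] [CompleteSpace U]
    [NormedAddCommGroup V] [InnerProductSpace ℝ V] [CompleteSpace V]
    (b : U →L[ℝ] V →L[ℝ] ℝ) (Cinf : ℝ) (hCinf : 0 < Cinf)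
    (hinj : ∀ u : U, (∀ v : V, b u v = 0) → u = 0)
    (hinfsup : ∀ v : V, Cinf * ‖v‖ ≤ ⨆ u : {u : U // u ≠ 0}, b u.1 v / ‖u.1‖)
    (L : V →L[ℝ] ℝ) (u : U) (hu : ∀ v : V, b u v = L v)
    (Uh : Submodule ℝ U) [FiniteDimensional ℝ Uh]
    (Θ : U →L[ℝ] V) (hΘ : ∀ (w : U) (v : V), ⟪Θ w, v⟫ = b w v) :
    ∃ uh : Uh,
      (∀ w : Uh, b (uh : U) (Θ (w : U)) = L (Θ (w : U))) ∧
      (∀ uh' : Uh, (∀ w : Uh, b (uh' : U) (Θ (w : U)) = L (Θ (w : U))) → uh' = uh) ∧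
      (⨆ v : {v : V // v ≠ 0}, b (u - (uh : U)) v.1 / ‖v.1‖) =
        ⨅ w : Uh, ⨆ v : {v : V // v ≠ 0}, b (u - (w : U)) v.1 / ‖v.1‖ :=
  dpg_best_approximation_general b hinj L u hu Uh Θ hΘ
end
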